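/- arXiv:math/0507160 — 2 statements merged into one kernel-verified Lean document; each statement's English description precedes it below -/
import Mathlib

section
/- For every real number q, the set B_q = {M ∈ co(2,1) : M·e₁ = −q·((trace M)/3)·e₁} is a 2-dimensional Lie subalgebra of the 3×3 real matrices with commutator bracket, consisting exactly of the matrices !![−qp, b, 0; 0, p, b; 0, 0, (q+2)p] with p, b ∈ ℝ; B_q is abelian if and only if q = −1. -/
open Matrix

attribute [local instance] LieRing.ofAssociativeRing

/-- Gram matrix of the Lorentzian quadratic form `Q(v) = v₂² − 2 v₁ v₃` of signature `(2,1)`. -/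
noncomputable def Gmat : Matrix (Fin 3) (Fin 3) ℝ := !![0,0,-1; 0,1,0; -1,0,0]

/-- The conformal Lorentz algebra `co(2,1)`. -/
noncomputable def co21 : Set (Matrix (Fin 3) (Fin 3) ℝ) :=
  {M | ∃ l : ℝ, Mᵀ * Gmat + Gmat * M = l • Gmat}

/-- The first standard basis vector `e₁ = (1,0,0)` of `ℝ³`, which is null for `Q`. -/
noncomputable def e1 : Fin 3 → ℝ := ![1, 0, 0]

/-- The subalgebra `B_q = {M ∈ co(2,1) : M·e₁ = −q·((trace M)/3)·e₁}`. -/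
noncomputable def typeB (q : ℝ) : Set (Matrix (Fin 3) (Fin 3) ℝ) :=
  {M ∈ co21 | M *ᵥ e1 = (-q * (M.trace / 3)) • e1}

/-!
Writing out `Mᵀ G + G M = λ G` entrywise, `co(2,1)` consists of the matrices with
`M₂₀ = M₀₂ = 0`, `M₂₁ = M₁₀`, `M₁₂ = M₀₁` and `M₀₀ + M₂₂ = 2 M₁₁`, so `trace M = 3 M₁₁`.
The condition on `M e₁` then kills `M₁₀` and forces `M₀₀ = -q M₁₁`, which leaves exactly the
two-parameter family `B(p, b) = bMatrix q p b`. It is closed under brackets because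
`⁅B(p, b), B(p', b')⁆ = B(0, -(q + 1)(p b' - p' b))`, and this vanishes identically iff `q = -1`.
-/

section bMatrix

variable {R : Type*} [CommRing R]

def bMatrix (q p b : R) : Matrix (Fin 3) (Fin 3) R :=
  !![-q * p, b, 0; 0, p, b; 0, 0, (q + 2) * p]

theorem bMatrix_add (q p b p' b' : R) :
    bMatrix q (p + p') (b + b') = bMatrix q p b + bMatrix q p' b' := by
  ext i j; fin_cases i <;> fin_cases j <;> simp [bMatrix] <;> ring

theorem bMatrix_smul (q c p b : R) : bMatrix q (c * p) (c * b) = c • bMatrix q p b := by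
  ext i j; fin_cases i <;> fin_cases j <;> simp [bMatrix] <;> ring

@[simp]
theorem bMatrix_zero (q : R) : bMatrix q 0 0 = 0 := by
  ext i j; fin_cases i <;> fin_cases j <;> simp [bMatrix]

theorem bMatrix_inj (q : R) {p b p' b' : R} :
    bMatrix q p b = bMatrix q p' b' ↔ p = p' ∧ b = b' := by
  refine ⟨fun h => ⟨?_, ?_⟩, fun ⟨hp, hb⟩ => hp ▸ hb ▸ rfl⟩
  · simpa [bMatrix] using congrFun₂ h 1 1
  · simpa [bMatrix] using congrFun₂ h 0 1

theorem lie_bMatrix (q p b p' b' : R) :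
    ⁅bMatrix q p b, bMatrix q p' b'⁆ = bMatrix q 0 (-(q + 1) * (p * b' - p' * b)) := by
  ext i j
  fin_cases i <;> fin_cases j <;>
    simp [Ring.lie_def, bMatrix] <;> ring

def bMatrixₗ (q : R) : (R × R) →ₗ[R] Matrix (Fin 3) (Fin 3) R where
  toFun x := bMatrix q x.1 x.2
  map_add' x y := bMatrix_add q x.1 x.2 y.1 y.2
  map_smul' c x := bMatrix_smul q c x.1 x.2

theorem bMatrixₗ_injective (q : R) : Function.Injective (bMatrixₗ q) :=
  fun _ _ h => Prod.ext_iff.2 ((bMatrix_inj q).1 h)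

def bSubalgebra (q : R) : LieSubalgebra R (Matrix (Fin 3) (Fin 3) R) :=
  { LinearMap.range (bMatrixₗ q) with
    lie_mem' := by
      rintro _ _ ⟨⟨p, b⟩, rfl⟩ ⟨⟨p', b'⟩, rfl⟩
      exact ⟨(0, _), (lie_bMatrix q p b p' b').symm⟩ }

theorem mem_bSubalgebra {q : R} {M : Matrix (Fin 3) (Fin 3) R} :
    M ∈ bSubalgebra q ↔ ∃ p b, M = bMatrix q p b := by
  simp [bSubalgebra, bMatrixₗ, eq_comm]

theorem finrank_bSubalgebra {K : Type*} [Field K] (q : K) : Module.finrank K (bSubalgebra q) = 2 := by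
  change Module.finrank K (LinearMap.range (bMatrixₗ q)) = 2
  rw [LinearMap.finrank_range_of_inj (bMatrixₗ_injective q), Module.finrank_prod,
    Module.finrank_self]

theorem isLieAbelian_bSubalgebra_iff (q : R) : IsLieAbelian (bSubalgebra q) ↔ q = -1 := by
  constructor
  · intro h
    have hp : bMatrix q 1 0 ∈ bSubalgebra q := mem_bSubalgebra.2 ⟨1, 0, rfl⟩
    have hb : bMatrix q 0 1 ∈ bSubalgebra q := mem_bSubalgebra.2 ⟨0, 1, rfl⟩
    have hlie := congrArg Subtype.val (h.trivial ⟨_, hp⟩ ⟨_, hb⟩)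
    rw [LieSubalgebra.coe_bracket, lie_bMatrix, ZeroMemClass.coe_zero, ← bMatrix_zero q] at hlie
    linear_combination -((bMatrix_inj q).1 hlie).2
  · rintro rfl
    refine ⟨fun ⟨_, hM⟩ ⟨_, hN⟩ => ?_⟩
    obtain ⟨p, b, rfl⟩ := mem_bSubalgebra.1 hM
    obtain ⟨p', b', rfl⟩ := mem_bSubalgebra.1 hN
    ext1
    change ⁅bMatrix (-1) p b, bMatrix (-1) p' b'⁆ = 0
    rw [lie_bMatrix]
    simp

end bMatrix

theorem transpose_mul_Gmat_add_Gmat_mul (M : Matrix (Fin 3) (Fin 3) ℝ) :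
    Mᵀ * Gmat + Gmat * M =
      !![-2 * M 2 0, M 1 0 - M 2 1, -(M 0 0 + M 2 2);
        M 1 0 - M 2 1, 2 * M 1 1, M 1 2 - M 0 1;
        -(M 0 0 + M 2 2), M 1 2 - M 0 1, -2 * M 0 2] := by
  ext i j
  fin_cases i <;> fin_cases j <;>
    simp [Gmat, Matrix.mul_apply, Matrix.vecMul, dotProduct, Fin.sum_univ_three] <;> ring

theorem mem_co21_iff {M : Matrix (Fin 3) (Fin 3) ℝ} :
    M ∈ co21 ↔ M 2 0 = 0 ∧ M 0 2 = 0 ∧ M 2 1 = M 1 0 ∧ M 1 2 = M 0 1 ∧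
      M 0 0 + M 2 2 = 2 * M 1 1 := by
  change (∃ l : ℝ, Mᵀ * Gmat + Gmat * M = l • Gmat) ↔ _
  rw [transpose_mul_Gmat_add_Gmat_mul, Gmat]
  simp only [Fin.isValue, neg_mul, neg_add_rev, smul_of, smul_cons, smul_eq_mul, mul_zero, mul_neg,
    mul_one, smul_empty, EmbeddingLike.apply_eq_iff_eq, vecCons_inj, neg_eq_zero, mul_eq_zero,
    OfNat.ofNat_ne_zero, false_or, and_true, ↓existsAndEq, true_and]
  constructor
  · rintro ⟨⟨h20, h21, hsum⟩, -, -, h12, h02⟩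
    exact ⟨h20, h02, by linarith, by linarith, by linarith⟩
  · rintro ⟨h20, h02, h21, h12, hsum⟩
    refine ⟨⟨h20, ?_, ?_⟩, ⟨?_, ?_⟩, ?_, ?_, h02⟩ <;> linarith

theorem mulVec_e1_eq_smul_iff {M : Matrix (Fin 3) (Fin 3) ℝ} {c : ℝ} :
    M *ᵥ e1 = c • e1 ↔ M 0 0 = c ∧ M 1 0 = 0 ∧ M 2 0 = 0 := by
  simp [funext_iff, Fin.forall_fin_succ, e1, Matrix.mulVec, dotProduct, Fin.sum_univ_three]

theorem typeB_eq (q : ℝ) : typeB q = {M | ∃ p b, M = bMatrix q p b} := by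
  ext M
  simp only [typeB, Set.mem_ofPred_eq, mem_co21_iff, mulVec_e1_eq_smul_iff, Matrix.trace_fin_three]
  constructor
  · rintro ⟨⟨h20, h02, h21, h12, hdiag⟩, h00, h10, -⟩
    have htrace : M 0 0 + M 1 1 + M 2 2 = 3 * M 1 1 := by linarith
    have h00' : M 0 0 = -q * M 1 1 := by rw [h00, htrace]; ring
    have h22 : M 2 2 = (q + 2) * M 1 1 := by linarith
    refine ⟨M 1 1, M 0 1, ?_⟩
    ext i j
    fin_cases i <;> fin_cases j <;> simp [bMatrix, h20, h02, h21, h12, h00', h10, h22]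
  · rintro ⟨p, b, rfl⟩
    refine ⟨⟨rfl, rfl, rfl, rfl, ?_⟩, ?_, rfl, rfl⟩
    · change -q * p + (q + 2) * p = 2 * p
      ring
    · change -q * p = -q * ((-q * p + p + (q + 2) * p) / 3)
      ring

/-- For every real `q`, `B_q` is a 2-dimensional Lie subalgebra of the 3×3 real matrices
with commutator bracket, consisting exactly of the matrices
`!![−qp, b, 0; 0, p, b; 0, 0, (q+2)p]`; `B_q` is abelian iff `q = −1`. -/
theorem stmt4 (q : ℝ) :
    (typeB q = {M | ∃ p b : ℝ, M = !![-q*p, b, 0; 0, p, b; 0, 0, (q+2)*p]}) ∧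
    (∃ L : LieSubalgebra ℝ (Matrix (Fin 3) (Fin 3) ℝ),
      (L : Set (Matrix (Fin 3) (Fin 3) ℝ)) = typeB q ∧
      Module.finrank ℝ L = 2 ∧
      (IsLieAbelian L ↔ q = -1)) := by
  refine ⟨typeB_eq q, bSubalgebra q, ?_, finrank_bSubalgebra q, isLieAbelian_bSubalgebra_iff q⟩
  ext M
  rw [typeB_eq]
  exact mem_bSubalgebra
end

section
/- Let H : ℝ³ → ℝ be a smooth (C²) everywhere positive function of coordinates (x,y,z) satisfying H·H_{yz} = H_y·H_z at every point, where subscripts denote partial derivatives along the corresponding coordinate directions. Then there exist smooth positive functions H₁ : ℝ² → ℝ and H₂ : ℝ² → ℝ such that H(x,y,z) = H₁(x,z)·H₂(x,y) for all (x,y,z) ∈ ℝ³. -/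
/-- If `H : ℝ³ → ℝ` is a `C²` everywhere-positive function satisfying
`H · H_yz = H_y · H_z` at every point, then `H` splits as
`H(x,y,z) = H₁(x,z) · H₂(x,y)` with `H₁, H₂` positive and `C²`. -/
theorem stmt10 (H : ℝ → ℝ → ℝ → ℝ)
    (hsmooth : ContDiff ℝ 2 (fun p : ℝ × ℝ × ℝ => H p.1 p.2.1 p.2.2))
    (hpos : ∀ x y z, 0 < H x y z)
    (heq : ∀ x y z,
      H x y z * deriv (fun t => deriv (fun s => H x s t) y) z
        = deriv (fun s => H x s z) y * deriv (fun t => H x y t) z) :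
    ∃ H₁ H₂ : ℝ → ℝ → ℝ,
      ContDiff ℝ 2 (fun p : ℝ × ℝ => H₁ p.1 p.2) ∧
      ContDiff ℝ 2 (fun p : ℝ × ℝ => H₂ p.1 p.2) ∧
      (∀ x z, 0 < H₁ x z) ∧
      (∀ x y, 0 < H₂ x y) ∧
      (∀ x y z, H x y z = H₁ x z * H₂ x y) := by
  set F : ℝ × ℝ × ℝ → ℝ := fun p => H p.1 p.2.1 p.2.2 with hF
  have hFdiff : Differentiable ℝ F := hsmooth.differentiable (by norm_num)
  -- the partial derivative in the y-direction as a function of the point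
  set Gy : ℝ × ℝ × ℝ → ℝ := fun p => fderiv ℝ F p (0, 1, 0) with hGy
  have hGyC1 : ContDiff ℝ 1 Gy := by
    have h1 : ContDiff ℝ 1 (fun p => fderiv ℝ F p) :=
      hsmooth.fderiv_right (by norm_num)
    exact h1.clm_apply contDiff_const
  -- derivative of s ↦ H x s z is Gy (x,y,z)
  have hA : ∀ x y z, HasDerivAt (fun s => H x s z) (Gy (x, y, z)) y := by
    intro x y z
    have hg : HasDerivAt (fun s : ℝ => ((x, s, z) : ℝ × ℝ × ℝ)) (0, 1, 0) y :=
      (hasDerivAt_const y x).prodMk ((hasDerivAt_id y).prodMk (hasDerivAt_const y z))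
    exact (hFdiff (x, y, z)).hasFDerivAt.comp_hasDerivAt y hg
  -- derivative of t ↦ H x y t is Gz (x,y,z)
  have hB : ∀ x y z, HasDerivAt (fun t => H x y t) (fderiv ℝ F (x, y, z) (0, 0, 1)) z := by
    intro x y z
    have hg : HasDerivAt (fun t : ℝ => ((x, y, t) : ℝ × ℝ × ℝ)) (0, 0, 1) z :=
      (hasDerivAt_const z x).prodMk ((hasDerivAt_const z y).prodMk (hasDerivAt_id z))
    exact (hFdiff (x, y, z)).hasFDerivAt.comp_hasDerivAt z hg
  -- key step 1: Gy/H independent of z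
  have key1 : ∀ x y z, Gy (x, y, z) * H x y 0 = Gy (x, y, 0) * H x y z := by
    intro x y z
    have hconst : ∀ t : ℝ, deriv (fun t => Gy (x, y, t) / H x y t) t = 0 ∧
        DifferentiableAt ℝ (fun t => Gy (x, y, t) / H x y t) t := by
      intro t
      -- Gy along the line is differentiable
      have hline : ContDiff ℝ 1 (fun t : ℝ => Gy (x, y, t)) := by
        have : ContDiff ℝ 1 (fun t : ℝ => ((x, y, t) : ℝ × ℝ × ℝ)) :=
          contDiff_const.prodMk (contDiff_const.prodMk contDiff_id)
        exact hGyC1.comp this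
      have hdiff : DifferentiableAt ℝ (fun t : ℝ => Gy (x, y, t)) t :=
        (hline.differentiable one_ne_zero) t
      have hD : HasDerivAt (fun t : ℝ => Gy (x, y, t))
          (deriv (fun t : ℝ => Gy (x, y, t)) t) t := hdiff.hasDerivAt
      have hHz : HasDerivAt (fun t => H x y t) (fderiv ℝ F (x, y, t) (0, 0, 1)) t := hB x y t
      have hne : H x y t ≠ 0 := (hpos x y t).ne'
      have hdiv := hD.div hHz hne
      have heqt : H x y t * deriv (fun t : ℝ => Gy (x, y, t)) t
          = Gy (x, y, t) * fderiv ℝ F (x, y, t) (0, 0, 1) := by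
        have e1 : (fun t : ℝ => Gy (x, y, t)) = fun t => deriv (fun s => H x s t) y := by
          funext t; exact ((hA x y t).deriv).symm
        have e2 : Gy (x, y, t) = deriv (fun s => H x s t) y := (hA x y t).deriv.symm
        have e3 : fderiv ℝ F (x, y, t) (0, 0, 1) = deriv (fun u => H x y u) t :=
          (hB x y t).deriv.symm
        rw [e1, e2, e3]; exact heq x y t
      have hval : (deriv (fun t : ℝ => Gy (x, y, t)) t * H x y t
          - Gy (x, y, t) * fderiv ℝ F (x, y, t) (0, 0, 1)) / H x y t ^ 2 = 0 := by
        have : deriv (fun t : ℝ => Gy (x, y, t)) t * H x y t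
            - Gy (x, y, t) * fderiv ℝ F (x, y, t) (0, 0, 1) = 0 := by linarith [heqt]
        rw [this]; simp
      rw [hval] at hdiv
      exact ⟨hdiv.deriv, hdiv.differentiableAt⟩
    have hc := is_const_of_deriv_eq_zero (f := fun t => Gy (x, y, t) / H x y t)
      (fun t => (hconst t).2) (fun t => (hconst t).1) z 0
    have h0 : H x y 0 ≠ 0 := (hpos x y 0).ne'
    have hz : H x y z ≠ 0 := (hpos x y z).ne'
    field_simp at hc
    linarith [hc]
  -- key step 2: H(x,y,z)/H(x,y,0) independent of y
  have key2 : ∀ x y z, H x y z * H x 0 0 = H x 0 z * H x y 0 := by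
    intro x y z
    have hconst : ∀ s : ℝ, deriv (fun s => H x s z / H x s 0) s = 0 ∧
        DifferentiableAt ℝ (fun s => H x s z / H x s 0) s := by
      intro s
      have h1 := hA x s z
      have h2 := hA x s 0
      have hne : H x s 0 ≠ 0 := (hpos x s 0).ne'
      have hdiv := h1.div h2 hne
      have hval : (Gy (x, s, z) * H x s 0 - H x s z * Gy (x, s, 0)) / H x s 0 ^ 2 = 0 := by
        have := key1 x s z
        have : Gy (x, s, z) * H x s 0 - H x s z * Gy (x, s, 0) = 0 := by linarith [key1 x s z]
        rw [this]; simp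
      rw [hval] at hdiv
      exact ⟨hdiv.deriv, hdiv.differentiableAt⟩
    have hc := is_const_of_deriv_eq_zero (f := fun s => H x s z / H x s 0)
      (fun s => (hconst s).2) (fun s => (hconst s).1) y 0
    have h0 : H x y 0 ≠ 0 := (hpos x y 0).ne'
    have h00 : H x 0 0 ≠ 0 := (hpos x 0 0).ne'
    field_simp at hc
    linarith [hc]
  refine ⟨fun x z => H x 0 z / H x 0 0, fun x y => H x y 0, ?_, ?_, ?_, ?_, ?_⟩
  · have c1 : ContDiff ℝ 2 (fun p : ℝ × ℝ => H p.1 0 p.2) := by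
      have : ContDiff ℝ 2 (fun p : ℝ × ℝ => ((p.1, 0, p.2) : ℝ × ℝ × ℝ)) :=
        contDiff_fst.prodMk (contDiff_const.prodMk contDiff_snd)
      exact hsmooth.comp this
    have c2 : ContDiff ℝ 2 (fun p : ℝ × ℝ => H p.1 0 0) := by
      have : ContDiff ℝ 2 (fun p : ℝ × ℝ => ((p.1, 0, 0) : ℝ × ℝ × ℝ)) :=
        contDiff_fst.prodMk (contDiff_const.prodMk contDiff_const)
      exact hsmooth.comp this
    exact c1.div c2 (fun p => (hpos p.1 0 0).ne')
  · have : ContDiff ℝ 2 (fun p : ℝ × ℝ => ((p.1, p.2, 0) : ℝ × ℝ × ℝ)) :=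
      contDiff_fst.prodMk (contDiff_snd.prodMk contDiff_const)
    exact hsmooth.comp this
  · intro x z; exact div_pos (hpos x 0 z) (hpos x 0 0)
  · intro x y; exact hpos x y 0
  · intro x y z
    have h00 : H x 0 0 ≠ 0 := (hpos x 0 0).ne'
    field_simp
    linarith [key2 x y z]
end
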